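/- (Descent inequality for orthogonalized updates.) Let $f : \mathbb{R}^{m\times n} \to \mathbb{R}$ be $L$-smooth with respect to the Frobenius norm, with the descent lemma $f(B) \le f(A) + \langle \nabla f(A), B-A\rangle_F + \frac{L}{2}\|B-A\|_F^2$. Suppose $W_{+} = W - \eta O$ where $O^\top O = I_n$ and $O$ maximizes $\langle C, \cdot\rangle_F$ over semi-orthogonal matrices for some matrix $C$. Then $f(W_+) \le f(W) + \eta\sqrt{n}\|C - \nabla f(W)\|_F - \eta\|\nabla f(W)\|_F + \frac{\eta}{2}\|\nabla f(W) - C\|_F^2 + \frac{(1+L\eta)\eta n}{2}$. -/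

import Mathlib

/-!
By the descent lemma along `-η O` it suffices to bound `-⟪∇f(W), O⟫`. Split
`∇f(W) = (∇f(W) - C) + C`: the first part is handled by `-⟪X, O⟫ ≤ ‖X‖²/2 + ‖O‖²/2` with
`‖O‖² = n`. For the second, maximality of `O` gives `⟪C, O⟫ ≥ ⟪C, O'⟫` for every semi-orthogonal
`O'`; choosing `O'` with `⟪G, O'⟫ ≥ ‖G‖` for `G = ∇f(W)`, Cauchy–Schwarz with `‖O'‖ = √n` gives
`⟪C, O'⟫ ≥ ‖G‖ - √n ‖C - G‖`.

Such an `O'` is the polar factor of `G`: diagonalizing `GᵀG = Q Λ Qᵀ` makes the columns of `GQ`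
pairwise orthogonal, normalizing and completing them gives orthonormal `u_j` with
`⟪(GQ)_j, u_j⟫ = ‖(GQ)_j‖`, and `O' = U Qᵀ` has `⟪G, O'⟫ = ∑ ‖(GQ)_j‖ ≥ ‖GQ‖ = ‖G‖`.
-/

open Matrix

noncomputable def fnorm {m n : ℕ} (A : Matrix (Fin m) (Fin n) ℝ) : ℝ :=
  Real.sqrt (Matrix.trace (Aᵀ * A))

def finner {m n : ℕ} (A B : Matrix (Fin m) (Fin n) ℝ) : ℝ :=
  Matrix.trace (Aᵀ * B)

open Module RealInnerProductSpace

theorem orthonormal_domRestrict_inv_norm_smul {ι E : Type*} [NormedAddCommGroup E]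
    [InnerProductSpace ℝ E] {v : ι → E} (hv : Pairwise fun i j => ⟪v i, v j⟫ = 0) :
    Orthonormal ℝ ({i | v i ≠ 0}.domRestrict fun i => ‖v i‖⁻¹ • v i) := by
  classical
  rw [orthonormal_iff_ite]
  rintro ⟨i, hi⟩ ⟨j, hj⟩
  simp only [Set.domRestrict_apply, real_inner_smul_left, real_inner_smul_right]
  split_ifs with hij
  · cases hij
    rw [real_inner_self_eq_norm_sq]
    field_simp [norm_ne_zero_iff.mpr hi]
  · rw [hv fun h => hij (Subtype.ext h), mul_zero, mul_zero]

theorem exists_orthonormal_inner_eq_norm {ι E : Type*} [Fintype ι] [NormedAddCommGroup E]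
    [InnerProductSpace ℝ E] [FiniteDimensional ℝ E] {v : ι → E}
    (hv : Pairwise fun i j => ⟪v i, v j⟫ = 0) (hcard : Fintype.card ι ≤ finrank ℝ E) :
    ∃ u : ι → E, Orthonormal ℝ u ∧ ∀ i, ⟪v i, u i⟫ = ‖v i‖ := by
  let w : ι ⊕ Fin (finrank ℝ E - Fintype.card ι) → E := Sum.elim v 0
  have hw : Pairwise fun i j => ⟪w i, w j⟫ = 0 := by
    rintro (i | i) (j | j) hij
    · exact hv fun h => hij (congrArg Sum.inl h)
    all_goals simp [w]
  obtain ⟨b, hb⟩ :=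
    (orthonormal_domRestrict_inv_norm_smul hw).exists_orthonormalBasis_extension_of_card_eq
      (by simp only [Fintype.card_sum, Fintype.card_fin]; omega)
  refine ⟨b ∘ Sum.inl, b.orthonormal.comp _ Sum.inl_injective, fun i => ?_⟩
  rcases eq_or_ne (v i) 0 with hvi | hvi
  · simp [hvi]
  · have hbi : b (Sum.inl i) = ‖v i‖⁻¹ • v i := hb (Sum.inl i) hvi
    rw [Function.comp_apply, hbi, real_inner_smul_right, real_inner_self_eq_norm_sq]
    field_simp [norm_ne_zero_iff.mpr hvi]

theorem neg_real_inner_le_half_norm_sq_add {E : Type*} [NormedAddCommGroup E]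
    [InnerProductSpace ℝ E] (x y : E) : -⟪x, y⟫ ≤ ‖x‖ ^ 2 / 2 + ‖y‖ ^ 2 / 2 := by
  nlinarith [norm_add_sq_real x y, sq_nonneg ‖x + y‖]

section Frobenius

variable {m n : ℕ}

def columnsL2 :
    Matrix (Fin m) (Fin n) ℝ →ₗ[ℝ] PiLp 2 (fun _ : Fin n => EuclideanSpace ℝ (Fin m)) where
  toFun A := WithLp.toLp 2 fun j => WithLp.toLp 2 (Aᵀ j)
  map_add' _ _ := rfl
  map_smul' _ _ := rfl

theorem columnsL2_apply (A : Matrix (Fin m) (Fin n) ℝ) (j : Fin n) :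
    columnsL2 A j = WithLp.toLp 2 (Aᵀ j) := rfl

theorem inner_columnsL2_apply (A B : Matrix (Fin m) (Fin n) ℝ) (i j : Fin n) :
    ⟪columnsL2 A i, columnsL2 B j⟫ = (Aᵀ * B) i j := by
  simp [columnsL2_apply, PiLp.inner_apply, mul_apply, mul_comm]

theorem finner_eq_inner (A B : Matrix (Fin m) (Fin n) ℝ) :
    finner A B = ⟪columnsL2 A, columnsL2 B⟫ := by
  simp [finner, trace, PiLp.inner_apply (𝕜 := ℝ) (columnsL2 A), inner_columnsL2_apply]

theorem fnorm_eq_norm (A : Matrix (Fin m) (Fin n) ℝ) : fnorm A = ‖columnsL2 A‖ := by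
  rw [norm_eq_sqrt_real_inner, ← finner_eq_inner]; rfl

theorem transpose_mul_self_eq_one_iff_orthonormal (U : Matrix (Fin m) (Fin n) ℝ) :
    Uᵀ * U = 1 ↔ Orthonormal ℝ (columnsL2 U) := by
  rw [orthonormal_iff_ite, ← Matrix.ext_iff]
  simp only [inner_columnsL2_apply, one_apply]

theorem exists_transpose_mul_self_eq_one_finner_eq_sum_norm (hmn : n ≤ m)
    {M : Matrix (Fin m) (Fin n) ℝ} (hM : (Mᵀ * M).IsDiag) :
    ∃ U : Matrix (Fin m) (Fin n) ℝ, Uᵀ * U = 1 ∧ finner M U = ∑ j, ‖columnsL2 M j‖ := by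
  obtain ⟨u, hu, hMu⟩ := exists_orthonormal_inner_eq_norm (v := columnsL2 M)
    (fun i j hij => (inner_columnsL2_apply M M i j).trans (hM hij)) (by simpa using hmn)
  let U : Matrix (Fin m) (Fin n) ℝ := of fun i j => u j i
  have hU : columnsL2 U = WithLp.toLp 2 u := rfl
  refine ⟨U, (transpose_mul_self_eq_one_iff_orthonormal U).2 (by rwa [hU]), ?_⟩
  rw [finner_eq_inner, PiLp.inner_apply, hU]
  exact Finset.sum_congr rfl fun j _ => hMu j

theorem finner_mul_transpose_right (A B : Matrix (Fin m) (Fin n) ℝ)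
    (Q : Matrix (Fin n) (Fin n) ℝ) : finner A (B * Qᵀ) = finner (A * Q) B := by
  rw [finner, finner, ← Matrix.mul_assoc, trace_mul_comm, transpose_mul, Matrix.mul_assoc]

theorem fnorm_mul_of_mul_transpose_eq_one {Q : Matrix (Fin n) (Fin n) ℝ} (hQ : Q * Qᵀ = 1)
    (A : Matrix (Fin m) (Fin n) ℝ) : fnorm (A * Q) = fnorm A := by
  have h : finner (A * Q) (A * Q) = finner A A := by
    rw [← finner_mul_transpose_right, Matrix.mul_assoc, hQ, Matrix.mul_one]
  rw [fnorm, fnorm, ← finner, ← finner, h]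

theorem fnorm_le_sum_norm_columnsL2 (A : Matrix (Fin m) (Fin n) ℝ) :
    fnorm A ≤ ∑ j, ‖columnsL2 A j‖ := by
  rw [fnorm_eq_norm]
  refine (pow_le_pow_iff_left₀ (norm_nonneg _) (by positivity) two_ne_zero).1 ?_
  rw [PiLp.norm_sq_eq_of_L2]
  exact Finset.sum_sq_le_sq_sum_of_nonneg fun j _ => norm_nonneg _

theorem exists_transpose_mul_self_eq_one_fnorm_le_finner (hmn : n ≤ m)
    (G : Matrix (Fin m) (Fin n) ℝ) :
    ∃ O : Matrix (Fin m) (Fin n) ℝ, Oᵀ * O = 1 ∧ fnorm G ≤ finner G O := by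
  have hH : (Gᵀ * G).IsHermitian := by simpa using isHermitian_conjTranspose_mul_self G
  let Q : Matrix (Fin n) (Fin n) ℝ := hH.eigenvectorUnitary
  have hQ : Qᵀ * Q = 1 ∧ Q * Qᵀ = 1 := hH.eigenvectorUnitary.2
  have hdiag : ((G * Q)ᵀ * (G * Q)).IsDiag := by
    have := hH.conjStarAlgAut_star_eigenvectorUnitary
    rw [Unitary.conjStarAlgAut_star_apply] at this
    simp only [transpose_mul, Matrix.mul_assoc] at this ⊢
    rw [star_eq_conjTranspose, conjTranspose_eq_transpose_of_trivial] at this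
    exact this ▸ isDiag_diagonal _
  obtain ⟨U, hU, hGQU⟩ := exists_transpose_mul_self_eq_one_finner_eq_sum_norm hmn hdiag
  refine ⟨U * Qᵀ, ?_, ?_⟩
  · rw [transpose_mul, transpose_transpose, Matrix.mul_assoc, ← Matrix.mul_assoc Uᵀ, hU,
      Matrix.one_mul, hQ.2]
  · calc fnorm G = fnorm (G * Q) := (fnorm_mul_of_mul_transpose_eq_one hQ.2 G).symm
      _ ≤ ∑ j, ‖columnsL2 (G * Q) j‖ := fnorm_le_sum_norm_columnsL2 _
      _ = finner G (U * Qᵀ) := by rw [finner_mul_transpose_right, hGQU]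

theorem fnorm_of_transpose_mul_self_eq_one {O : Matrix (Fin m) (Fin n) ℝ} (hO : Oᵀ * O = 1) :
    fnorm O = √n := by
  rw [fnorm, hO, trace_one, Fintype.card_fin]

theorem fnorm_sub_sqrt_mul_fnorm_sub_le_finner_of_forall_le (hmn : n ≤ m)
    {C O : Matrix (Fin m) (Fin n) ℝ}
    (hmax : ∀ O' : Matrix (Fin m) (Fin n) ℝ, O'ᵀ * O' = 1 → finner C O' ≤ finner C O)
    (G : Matrix (Fin m) (Fin n) ℝ) :
    fnorm G - √n * fnorm (C - G) ≤ finner C O := by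
  obtain ⟨O', hO', hGO'⟩ := exists_transpose_mul_self_eq_one_fnorm_le_finner hmn G
  have hCS : -(fnorm (C - G) * fnorm O') ≤ finner (C - G) O' := by
    rw [fnorm_eq_norm, fnorm_eq_norm, finner_eq_inner]
    exact neg_le_of_abs_le (abs_real_inner_le_norm _ _)
  have hsplit : finner C O' = finner G O' + finner (C - G) O' := by
    simp only [finner_eq_inner, map_sub, inner_sub_left]; ring
  rw [fnorm_of_transpose_mul_self_eq_one hO'] at hCS
  linarith [hmax O' hO']

end Frobenius

theorem stmt_14_general {m n : ℕ} (hmn : n ≤ m) (L η : ℝ) (hη : 0 < η)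
    (f : Matrix (Fin m) (Fin n) ℝ → ℝ)
    (g : Matrix (Fin m) (Fin n) ℝ → Matrix (Fin m) (Fin n) ℝ)
    (hdesc : ∀ A B, f B ≤ f A + finner (g A) (B - A) + L / 2 * fnorm (B - A) ^ 2)
    (C O W Wplus : Matrix (Fin m) (Fin n) ℝ)
    (hO : Oᵀ * O = 1)
    (hmax : ∀ O' : Matrix (Fin m) (Fin n) ℝ, O'ᵀ * O' = 1 → finner C O' ≤ finner C O)
    (hupdate : Wplus = W - η • O) :
    f Wplus ≤ f W + η * Real.sqrt n * fnorm (C - g W) - η * fnorm (g W)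
      + η / 2 * fnorm (g W - C) ^ 2 + (1 + L * η) * η * n / 2 := by
  subst hupdate
  have hinner : finner (g W) (-(η • O)) = -(η * finner (g W) O) := by
    rw [finner_eq_inner, finner_eq_inner, map_neg, map_smul, inner_neg_right,
      real_inner_smul_right]
  have hnorm : fnorm (-(η • O)) ^ 2 = η ^ 2 * n := by
    rw [fnorm_eq_norm, map_neg, norm_neg, map_smul, norm_smul, ← fnorm_eq_norm,
      fnorm_of_transpose_mul_self_eq_one hO, mul_pow, Real.norm_eq_abs, sq_abs,
      Real.sq_sqrt n.cast_nonneg]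
  have hstep := hdesc W (W - η • O)
  rw [sub_sub_cancel_left, hinner, hnorm] at hstep
  have hsplit : finner (g W) O = finner (g W - C) O + finner C O := by
    simp only [finner_eq_inner, map_sub, inner_sub_left]; ring
  have hpolar : -finner (g W - C) O ≤ fnorm (g W - C) ^ 2 / 2 + n / 2 := by
    rw [finner_eq_inner, fnorm_eq_norm, ← Real.sq_sqrt n.cast_nonneg,
      ← fnorm_of_transpose_mul_self_eq_one hO, fnorm_eq_norm]
    exact neg_real_inner_le_half_norm_sq_add _ _
  have hnuclear := fnorm_sub_sqrt_mul_fnorm_sub_le_finner_of_forall_le hmn hmax (g W)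
  have hlower : fnorm (g W) - √n * fnorm (C - g W) - (fnorm (g W - C) ^ 2 / 2 + n / 2)
      ≤ finner (g W) O := by linarith
  linarith [mul_le_mul_of_nonneg_left hlower hη.le]

/-- Descent inequality for orthogonalized updates. Let `f` be `L`-smooth
w.r.t. the Frobenius norm with gradient `g`, satisfying the descent lemma
`f(B) ≤ f(A) + ⟨g(A), B-A⟩_F + (L/2)‖B-A‖_F²`. Suppose `W₊ = W - η O` where
`Oᵀ O = Iₙ` and `O` maximizes `⟨C, ·⟩_F` over semi-orthogonal matrices. Then
`f(W₊) ≤ f(W) + η√n‖C - g(W)‖_F - η‖g(W)‖_F + (η/2)‖g(W) - C‖_F² + (1+Lη)ηn/2`. -/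
theorem stmt_14 {m n : ℕ} (hmn : n ≤ m) (L η : ℝ) (hL : 0 ≤ L) (hη : 0 < η)
    (f : Matrix (Fin m) (Fin n) ℝ → ℝ)
    (g : Matrix (Fin m) (Fin n) ℝ → Matrix (Fin m) (Fin n) ℝ)
    (hdesc : ∀ A B, f B ≤ f A + finner (g A) (B - A) + L / 2 * fnorm (B - A) ^ 2)
    (C O W Wplus : Matrix (Fin m) (Fin n) ℝ)
    (hO : Oᵀ * O = 1)
    (hmax : ∀ O' : Matrix (Fin m) (Fin n) ℝ, O'ᵀ * O' = 1 → finner C O' ≤ finner C O)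
    (hupdate : Wplus = W - η • O) :
    f Wplus ≤ f W + η * Real.sqrt n * fnorm (C - g W) - η * fnorm (g W)
      + η / 2 * fnorm (g W - C) ^ 2 + (1 + L * η) * η * n / 2 :=
  stmt_14_general hmn L η hη f g hdesc C O W Wplus hO hmax hupdate
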